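/- arXiv:math/0410127 — 5 statements merged into one kernel-verified Lean document; each statement's English description precedes it below -/
import Mathlib

section
/- The generating function G(t,s,z) = Σ_T t^(old leaves of T) s^(young leaves of T) z^(edges of T), summed over all plane trees T, satisfies the functional equation G = 1 + z(G-1+t)/(1 - z(G-1+s)). -/
/-- A plane tree: a root together with an ordered (possibly empty) list of subtrees. -/
inductive PlaneTree where
  | node : List PlaneTree → PlaneTree

namespace PlaneTree

/-- The number of edges of a plane tree. -/
def edges : PlaneTree → ℕ
  | node ts => (ts.attach.map (fun t => edges t.1 + 1)).sum
decreasing_by have := List.sizeOf_lt_of_mem t.2; simp at *; omega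

/-- Indicator that a tree is a single vertex (i.e. the corresponding child is a leaf). -/
def isLeafInd : PlaneTree → ℕ
  | node [] => 1
  | node (_ :: _) => 0

/-- The number of old leaves: leaves that are the leftmost child of their parent. -/
def oldLeaves : PlaneTree → ℕ
  | node [] => 0
  | node (t :: ts) =>
      isLeafInd t + oldLeaves t + (ts.attach.map (fun s => oldLeaves s.1)).sum
decreasing_by
  · simp; omega
  · have := List.sizeOf_lt_of_mem s.2; simp at *; omega

/-- The number of young leaves: leaves that are not the leftmost child of their parent. -/
def youngLeaves : PlaneTree → ℕ
  | node [] => 0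
  | node (t :: ts) =>
      youngLeaves t + (ts.attach.map (fun s => isLeafInd s.1 + youngLeaves s.1)).sum
decreasing_by
  · simp; omega
  · have := List.sizeOf_lt_of_mem s.2; simp at *; omega

end PlaneTree

open MvPolynomial

/-- The coefficients of the trivariate generating function `G(t,s,z)` for plane trees:
the coefficient of `z^n` is `Σ_{i,j} (# trees with n edges, i old leaves, j young leaves) t^i s^j`,
as a polynomial in `t = X 0` and `s = X 1`. -/
noncomputable def treeGF : PowerSeries (MvPolynomial (Fin 2) ℚ) :=
  PowerSeries.mk fun n =>
    ∑ i ∈ Finset.range (n + 1), ∑ j ∈ Finset.range (n + 1),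
      (Nat.card {T : PlaneTree // T.edges = n ∧ T.oldLeaves = i ∧ T.youngLeaves = j} :
          MvPolynomial (Fin 2) ℚ) * X 0 ^ i * X 1 ^ j

/-! Removing the rightmost subtree `c` of the root writes every tree other than the single vertex
uniquely as `snoc T c`, with `edges (snoc T c) = edges T + edges c + 1`. The weight
`t ^ oldLeaves * s ^ youngLeaves` is multiplicative along this decomposition, except that `c`,
if it is a single vertex, is an old leaf (weight `t`) when `T` is the single vertex and a young
leaf (weight `s`) otherwise. Hence `G - 1 = z (G - 1 + t) + z (G - 1) (G - 1 + s)`, and since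
`1 - z (G - 1 + s)` has constant coefficient `1` it can be divided out. -/

open Finset

namespace PlaneTree

noncomputable instance : DecidableEq PlaneTree := Classical.decEq _

theorem edges_node (ts : List PlaneTree) :
    (node ts).edges = (ts.map fun t => t.edges + 1).sum := by
  rw [edges]; simp

theorem oldLeaves_cons (t : PlaneTree) (ts : List PlaneTree) :
    (node (t :: ts)).oldLeaves = t.isLeafInd + t.oldLeaves + (ts.map oldLeaves).sum := by
  rw [oldLeaves]; simp

theorem youngLeaves_cons (t : PlaneTree) (ts : List PlaneTree) :
    (node (t :: ts)).youngLeaves =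
      t.youngLeaves + (ts.map fun s => s.isLeafInd + s.youngLeaves).sum := by
  rw [youngLeaves]; simp

theorem isLeafInd_le_one (T : PlaneTree) : T.isLeafInd ≤ 1 := by
  obtain ⟨_ | _⟩ := T <;> simp [isLeafInd]

def snoc : PlaneTree → PlaneTree → PlaneTree
  | node l, c => node (l ++ [c])

theorem snoc_inj {T T' c c' : PlaneTree} : snoc T c = snoc T' c' ↔ T = T' ∧ c = c' := by
  obtain ⟨l⟩ := T
  obtain ⟨l'⟩ := T'
  simp [snoc, ← List.concat_eq_append, List.concat_inj]

theorem exists_snoc_eq {T : PlaneTree} (hT : T ≠ node []) : ∃ T' c, snoc T' c = T := by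
  obtain ⟨l⟩ := T
  obtain rfl | ⟨l', c, rfl⟩ := l.eq_nil_or_concat'
  · exact absurd rfl hT
  · exact ⟨node l', c, rfl⟩

theorem edges_snoc (T c : PlaneTree) : (snoc T c).edges = T.edges + c.edges + 1 := by
  obtain ⟨l⟩ := T
  simp [snoc, edges_node, add_assoc]

theorem oldLeaves_snoc_node_nil (c : PlaneTree) :
    (snoc (node []) c).oldLeaves = c.isLeafInd + c.oldLeaves := by
  simp [snoc, oldLeaves_cons]

theorem youngLeaves_snoc_node_nil (c : PlaneTree) :
    (snoc (node []) c).youngLeaves = c.youngLeaves := by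
  simp [snoc, youngLeaves_cons]

theorem oldLeaves_snoc {T : PlaneTree} (hT : T ≠ node []) (c : PlaneTree) :
    (snoc T c).oldLeaves = T.oldLeaves + c.oldLeaves := by
  obtain ⟨_ | ⟨t, ts⟩⟩ := T
  · exact absurd rfl hT
  · simp [snoc, oldLeaves_cons, add_assoc]

theorem youngLeaves_snoc {T : PlaneTree} (hT : T ≠ node []) (c : PlaneTree) :
    (snoc T c).youngLeaves = T.youngLeaves + (c.isLeafInd + c.youngLeaves) := by
  obtain ⟨_ | ⟨t, ts⟩⟩ := T
  · exact absurd rfl hT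
  · simp [snoc, youngLeaves_cons, add_assoc]

@[elab_as_elim]
theorem snoc_induction {P : PlaneTree → Prop} (node_nil : P (node []))
    (snoc : ∀ T c, P T → P c → P (snoc T c)) (T : PlaneTree) : P T := by
  induction h : T.edges using Nat.strong_induction_on generalizing T with
  | _ n ih =>
    by_cases hT : T = node []
    · exact hT ▸ node_nil
    obtain ⟨T', c, rfl⟩ := exists_snoc_eq hT
    rw [edges_snoc] at h
    exact snoc T' c (ih _ (by omega) T' rfl) (ih _ (by omega) c rfl)

theorem oldLeaves_add_youngLeaves_le_edges (T : PlaneTree) :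
    T.oldLeaves + T.youngLeaves ≤ T.edges := by
  induction T using snoc_induction with
  | node_nil => simp [oldLeaves, youngLeaves, edges_node]
  | snoc T c hT hc =>
    have := c.isLeafInd_le_one
    by_cases h : T = node []
    · subst h
      rw [oldLeaves_snoc_node_nil, youngLeaves_snoc_node_nil, edges_snoc]
      omega
    · rw [oldLeaves_snoc h, youngLeaves_snoc h, edges_snoc]
      omega

theorem edges_pos {T : PlaneTree} (hT : T ≠ node []) : 0 < T.edges := by
  obtain ⟨T', c, rfl⟩ := exists_snoc_eq hT
  rw [edges_snoc]
  omega

theorem finite_setOf_edges_le (n : ℕ) : {T : PlaneTree | T.edges ≤ n}.Finite := by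
  induction n with
  | zero =>
    refine (Set.finite_singleton (node [])).subset fun T hT => ?_
    by_contra hT'
    exact (edges_pos hT').ne' (Nat.le_zero.mp hT)
  | succ n ih =>
    refine ((ih.image2 snoc ih).insert (node [])).subset fun T hT => ?_
    by_cases hT' : T = node []
    · exact Or.inl hT'
    obtain ⟨T', c, rfl⟩ := exists_snoc_eq hT'
    rw [Set.mem_ofPred_eq, edges_snoc] at hT
    exact Or.inr ⟨T', show T'.edges ≤ n by omega, c, show c.edges ≤ n by omega, rfl⟩

theorem finite_setOf_edges_eq (n : ℕ) : {T : PlaneTree | T.edges = n}.Finite :=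
  (finite_setOf_edges_le n).subset fun _ h => le_of_eq h

noncomputable def withEdges (n : ℕ) : Finset PlaneTree :=
  (finite_setOf_edges_eq n).toFinset

@[simp]
theorem mem_withEdges {n : ℕ} {T : PlaneTree} : T ∈ withEdges n ↔ T.edges = n := by
  simp [withEdges]

@[simp]
theorem edges_node_nil : (node []).edges = 0 := by
  simp [edges_node]

theorem withEdges_zero : withEdges 0 = {node []} := by
  ext T
  simp only [mem_withEdges, mem_singleton]
  exact ⟨fun h => by_contra fun hT => (edges_pos hT).ne' h, fun h => h ▸ edges_node_nil⟩

theorem sum_withEdges_ite_node_nil {M : Type*} [AddCommMonoid M] (n : ℕ) (a : M)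
    (f : PlaneTree → M) :
    ∑ T ∈ withEdges n, (if T = node [] then a else f T) =
      if n = 0 then a else ∑ T ∈ withEdges n, f T := by
  cases n with
  | zero => simp [withEdges_zero]
  | succ n =>
    refine sum_congr rfl fun T hT => if_neg ?_
    rintro rfl
    simp at hT

theorem sum_withEdges_succ {M : Type*} [AddCommMonoid M] (n : ℕ) (f : PlaneTree → M) :
    ∑ T ∈ withEdges (n + 1), f T =
      ∑ p ∈ antidiagonal n, ∑ T ∈ withEdges p.1, ∑ c ∈ withEdges p.2, f (snoc T c) := by
  have hdisj : (antidiagonal n : Set (ℕ × ℕ)).PairwiseDisjoint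
      fun p => withEdges p.1 ×ˢ withEdges p.2 := by
    intro p _ q _ hpq
    refine disjoint_left.mpr fun x hp hq => hpq ?_
    simp only [mem_product, mem_withEdges] at hp hq
    exact Prod.ext (hp.1.symm.trans hq.1) (hp.2.symm.trans hq.2)
  have himage : withEdges (n + 1) = ((antidiagonal n).biUnion
      fun p => withEdges p.1 ×ˢ withEdges p.2).image fun x => snoc x.1 x.2 := by
    ext T
    simp only [mem_withEdges, mem_image, mem_biUnion, mem_product,
      HasAntidiagonal.mem_antidiagonal, Prod.exists]
    constructor
    · intro hT
      obtain ⟨T', c, rfl⟩ := exists_snoc_eq (T := T) fun h => by simp [h] at hT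
      rw [edges_snoc] at hT
      exact ⟨T', c, ⟨_, _, by omega, rfl, rfl⟩, rfl⟩
    · rintro ⟨T', c, ⟨i, j, hij, rfl, rfl⟩, rfl⟩
      rw [edges_snoc, hij]
  have hinj : Set.InjOn (fun x : PlaneTree × PlaneTree => snoc x.1 x.2) Set.univ :=
    fun x _ y _ h => Prod.ext_iff.mpr (snoc_inj.mp h)
  simp_rw [← sum_product', himage, sum_image (hinj.mono (Set.subset_univ _)),
    sum_biUnion hdisj]

noncomputable def weight (T : PlaneTree) : MvPolynomial (Fin 2) ℚ :=
  X 0 ^ T.oldLeaves * X 1 ^ T.youngLeaves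

@[simp]
theorem weight_node_nil : weight (node []) = 1 := by
  simp [weight, oldLeaves, youngLeaves]

/-- A leaf child counts as old as a leftmost child and as young otherwise, so `c` contributes
`childWeight (X 0) c` as a leftmost child and `childWeight (X 1) c` as any other child. -/
noncomputable def childWeight (x : MvPolynomial (Fin 2) ℚ) (c : PlaneTree) :
    MvPolynomial (Fin 2) ℚ :=
  if c = node [] then x else weight c

theorem weight_snoc (T c : PlaneTree) :
    weight (snoc T c) =
      if T = node [] then childWeight (X 0) c else weight T * childWeight (X 1) c := by
  have hleaf : ∀ x : MvPolynomial (Fin 2) ℚ, x ^ c.isLeafInd * weight c = childWeight x c := by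
    intro x
    obtain ⟨_ | _⟩ := c <;> simp [childWeight, isLeafInd]
  split_ifs with hT
  · rw [hT, ← hleaf, weight, weight, oldLeaves_snoc_node_nil, youngLeaves_snoc_node_nil]
    ring
  · rw [← hleaf, weight, weight, weight, oldLeaves_snoc hT, youngLeaves_snoc hT]
    ring

noncomputable def weightGF : PowerSeries (MvPolynomial (Fin 2) ℚ) :=
  PowerSeries.mk fun n => ∑ T ∈ withEdges n, weight T

noncomputable def childWeightGF (x : MvPolynomial (Fin 2) ℚ) :
    PowerSeries (MvPolynomial (Fin 2) ℚ) :=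
  PowerSeries.mk fun n => ∑ c ∈ withEdges n, childWeight x c

@[simp]
theorem coeff_weightGF (n : ℕ) :
    PowerSeries.coeff n weightGF = ∑ T ∈ withEdges n, weight T :=
  PowerSeries.coeff_mk _ _

@[simp]
theorem coeff_childWeightGF (x : MvPolynomial (Fin 2) ℚ) (n : ℕ) :
    PowerSeries.coeff n (childWeightGF x) = ∑ c ∈ withEdges n, childWeight x c :=
  PowerSeries.coeff_mk _ _

@[simp]
theorem constantCoeff_weightGF : PowerSeries.constantCoeff weightGF = 1 := by
  rw [← PowerSeries.coeff_zero_eq_constantCoeff_apply, coeff_weightGF, withEdges_zero,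
    sum_singleton, weight_node_nil]

theorem treeGF_eq_weightGF : treeGF = weightGF := by
  refine PowerSeries.ext fun n => ?_
  have hmaps : ∀ T ∈ withEdges n,
      (T.oldLeaves, T.youngLeaves) ∈ range (n + 1) ×ˢ range (n + 1) := by
    intro T hT
    have := T.oldLeaves_add_youngLeaves_le_edges
    simp only [mem_withEdges] at hT
    simp only [mem_product, mem_range]
    omega
  rw [treeGF, PowerSeries.coeff_mk, coeff_weightGF, ← sum_product',
    ← sum_fiberwise_of_maps_to hmaps]
  refine sum_congr rfl fun ⟨i, j⟩ _ => ?_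
  have hcard : Nat.card {T : PlaneTree // T.edges = n ∧ T.oldLeaves = i ∧ T.youngLeaves = j} =
      #{T ∈ withEdges n | (T.oldLeaves, T.youngLeaves) = (i, j)} :=
    Nat.subtype_card _ fun T => by simp
  rw [hcard, sum_congr rfl fun T hT => by
      simp only [mem_filter, Prod.mk.injEq] at hT
      rw [weight, hT.2.1, hT.2.2],
    sum_const, nsmul_eq_mul, mul_assoc]

theorem coeff_weightGF_sub_one (n : ℕ) :
    PowerSeries.coeff n (weightGF - 1) = if n = 0 then 0 else ∑ T ∈ withEdges n, weight T := by
  cases n with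
  | zero => simp
  | succ n => simp

theorem childWeightGF_eq (x : MvPolynomial (Fin 2) ℚ) :
    childWeightGF x = weightGF - 1 + PowerSeries.C x := by
  refine PowerSeries.ext fun n => ?_
  rw [coeff_childWeightGF, map_add, coeff_weightGF_sub_one, PowerSeries.coeff_C]
  simp only [childWeight, sum_withEdges_ite_node_nil]
  split_ifs <;> simp

theorem weightGF_eq_one_add_X_mul :
    weightGF = 1 + PowerSeries.X *
      (childWeightGF (X 0) + (weightGF - 1) * childWeightGF (X 1)) := by
  refine PowerSeries.ext fun n => ?_
  cases n with
  | zero => simp [withEdges_zero]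
  | succ n =>
    have hpair : ∀ p ∈ antidiagonal n,
        ∑ T ∈ withEdges p.1, ∑ c ∈ withEdges p.2, weight (snoc T c) =
          PowerSeries.coeff p.1 1 * PowerSeries.coeff p.2 (childWeightGF (X 0)) +
            PowerSeries.coeff p.1 (weightGF - 1) * PowerSeries.coeff p.2 (childWeightGF (X 1)) := by
      intro p _
      have hinner : ∀ T, ∑ c ∈ withEdges p.2, weight (snoc T c) =
          if T = node [] then PowerSeries.coeff p.2 (childWeightGF (X 0))
          else weight T * PowerSeries.coeff p.2 (childWeightGF (X 1)) := by
        intro T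
        simp only [weight_snoc, coeff_childWeightGF]
        split_ifs <;> simp [mul_sum]
      rw [sum_congr rfl fun T _ => hinner T, sum_withEdges_ite_node_nil, coeff_weightGF_sub_one,
        PowerSeries.coeff_one]
      split_ifs <;> simp [sum_mul]
    rw [map_add, PowerSeries.coeff_succ_X_mul, PowerSeries.coeff_one, if_neg n.succ_ne_zero,
      zero_add, coeff_weightGF, sum_withEdges_succ, ← one_mul (childWeightGF (X 0)), map_add,
      PowerSeries.coeff_mul, PowerSeries.coeff_mul, ← sum_add_distrib]
    exact sum_congr rfl hpair

end PlaneTree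

/-- The generating function `G(t,s,z)` satisfies `G = 1 + z(G-1+t)/(1 - z(G-1+s))`. -/
theorem treeGF_functional_equation :
    letI t : PowerSeries (MvPolynomial (Fin 2) ℚ) := PowerSeries.C (X 0)
    letI s : PowerSeries (MvPolynomial (Fin 2) ℚ) := PowerSeries.C (X 1)
    letI z : PowerSeries (MvPolynomial (Fin 2) ℚ) := PowerSeries.X
    treeGF = 1 + z * (treeGF - 1 + t) * Ring.inverse (1 - z * (treeGF - 1 + s)) := by
  rw [PlaneTree.treeGF_eq_weightGF, ← PlaneTree.childWeightGF_eq, ← PlaneTree.childWeightGF_eq]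
  set G := PlaneTree.weightGF
  set A := PlaneTree.childWeightGF (X 0)
  set B := PlaneTree.childWeightGF (X 1)
  have hunit : IsUnit (1 - PowerSeries.X * B) := by
    simp [PowerSeries.isUnit_iff_constantCoeff]
  have hrec : (G - 1) * (1 - PowerSeries.X * B) = PowerSeries.X * A := by
    linear_combination PlaneTree.weightGF_eq_one_add_X_mul
  calc G = 1 + (G - 1) * (1 - PowerSeries.X * B) * Ring.inverse (1 - PowerSeries.X * B) := by
        rw [mul_assoc, Ring.mul_inverse_cancel _ hunit]; ring
    _ = 1 + PowerSeries.X * A * Ring.inverse (1 - PowerSeries.X * B) := by rw [hrec]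
end

section
/- For all n ≥ 0 and i ≥ 1, j ≥ 0 with 2i + j ≤ n + 1: Σ_j holds the identity (1/n)·C(n,i)·C(n-i,j)·C(n-i-j,i-1) summed over j from 0 to n-2i+1 equals (2^(n-2k+1)/k)·C(n-1,2k-2)·C(2k-2,k-1) with k = i; that is, Σ_{j=0}^{n-2i+1} (1/n)·C(n,i)·C(n-i,j)·C(n-i-j,i-1) = (2^(n-2i+1)/i)·C(n-1,2i-2)·C(2i-2,i-1). -/
/-!
Trinomial revision `C(m,j)·C(m-j,r) = C(m,r)·C(m-r,j)` turns each summand into a fixed factor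
times `C(m-r,j)`, so the sum over `j` is that factor times `2^(m-r)`. The remaining scalar identity
`i·C(n,i)·C(n-i,i-1) = n·C(n-1,2i-2)·C(2i-2,i-1)` is the absorption identity combined with
another trinomial revision.
-/

open Finset

namespace Nat

theorem choose_mul_choose_sub_comm (m j r : ℕ) :
    m.choose j * (m - j).choose r = m.choose r * (m - r).choose j := by
  have hj := choose_mul (n := m) (Nat.le_add_right j r)
  have hr := choose_mul (n := m) (Nat.le_add_left r j)
  rw [Nat.add_sub_cancel_left] at hj
  rw [Nat.add_sub_cancel] at hr
  rw [← hj, ← hr, choose_symm_add]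

theorem sum_range_choose_mul_choose_sub (m r : ℕ) :
    ∑ j ∈ range (m - r + 1), m.choose j * (m - j).choose r = m.choose r * 2 ^ (m - r) := by
  simp only [choose_mul_choose_sub_comm m _ r, ← mul_sum, sum_range_choose]

theorem succ_mul_choose_mul_choose_sub (n r : ℕ) :
    (r + 1) * (n + 1).choose (r + 1) * (n - r).choose r =
      (n + 1) * n.choose (2 * r) * (2 * r).choose r := by
  have hmul : n.choose (2 * r) * (2 * r).choose r = n.choose r * (n - r).choose r := by
    rw [choose_mul (by omega : r ≤ 2 * r), show 2 * r - r = r by omega]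
  rw [mul_assoc (n + 1), hmul, ← mul_assoc, add_one_mul_choose_eq, mul_comm (r + 1)]

end Nat

theorem sum_refined_eq_old_count_general (n i : ℕ) (hi : 1 ≤ i) (h : 2 * i - 1 ≤ n) :
    ∑ j ∈ Finset.range (n + 2 - 2 * i),
        (1 / n : ℚ) * n.choose i * (n - i).choose j * (n - i - j).choose (i - 1) =
      (2 ^ (n + 1 - 2 * i) / i : ℚ) * (n - 1).choose (2 * i - 2) * (2 * i - 2).choose (i - 1) := by
  obtain ⟨r, rfl⟩ : ∃ r, i = r + 1 := ⟨i - 1, by omega⟩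
  obtain ⟨k, rfl⟩ : ∃ k, n = k + 1 := ⟨n - 1, by omega⟩
  have hlen : k + 1 + 2 - 2 * (r + 1) = k - r - r + 1 := by omega
  have hexp : k + 1 + 1 - 2 * (r + 1) = k - r - r := by omega
  have hdeg : 2 * (r + 1) - 2 = 2 * r := by omega
  have hsum := congrArg (Nat.cast : ℕ → ℚ) (Nat.sum_range_choose_mul_choose_sub (k - r) r)
  have hscalar := congrArg (Nat.cast : ℕ → ℚ) (Nat.succ_mul_choose_mul_choose_sub k r)
  push_cast at hsum
  simp only [hlen, hexp, hdeg, Nat.add_sub_add_right, Nat.add_sub_cancel, mul_assoc, ← mul_sum,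
    hsum]
  push_cast at hscalar ⊢
  field_simp
  linear_combination hscalar

/-- Summing the refined count of plane trees over the number of young leaves `j`
recovers the count by old leaves:
`Σ_{j=0}^{n-2i+1} (1/n)·C(n,i)·C(n-i,j)·C(n-i-j,i-1) = (2^(n-2i+1)/i)·C(n-1,2i-2)·C(2i-2,i-1)`. -/
theorem sum_refined_eq_old_count (n i : ℕ) (hn : 1 ≤ n) (hi : 1 ≤ i) (h : 2 * i - 1 ≤ n) :
    ∑ j ∈ Finset.range (n + 2 - 2 * i),
        (1 / n : ℚ) * n.choose i * (n - i).choose j * (n - i - j).choose (i - 1) =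
      (2 ^ (n + 1 - 2 * i) / i : ℚ) * (n - 1).choose (2 * i - 2) * (2 * i - 2).choose (i - 1) :=
  sum_refined_eq_old_count_general n i hi h
end

section
/- For n ≥ 1 and 0 ≤ j ≤ n-1: Σ_{i=1}^{⌊(n-j+1)/2⌋} (1/n)·C(n,i)·C(n-i,j)·C(n-i-j,i-1) = C(n-1,j)·M_{n-j-1}, where M_m is the m-th Motzkin number. -/
/-!
Write `n = m + j + 1` and `i = k + 1`. Absorption `C(n, k+1) / n = C(n-1, k) / (k+1)`, the
trinomial revision `C(n-1, k) C(n-1-k, j) = C(n-1, j) C(m, k)` and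
`C(m, k) C(m-k, k) = C(m, 2k) C(2k, k) = (k+1) C(m, 2k) Catalan(k)` turn the `i`-th summand into
`C(n-1, j) C(m, 2k) Catalan(k)`, the `k`-th term of `C(n-1, j) M_m`; the terms of `M_m` with
`k > m/2` vanish.
-/

/-- The `m`-th Motzkin number, `M_m = Σ_k C(m,2k)·Catalan(k)`. -/
def motzkin (m : ℕ) : ℕ := ∑ k ∈ Finset.range (m + 1), m.choose (2 * k) * catalan k

open Finset

namespace Nat

theorem choose_mul_choose_sub_eq_zero {n a b : ℕ} (h : n < a + b) :
    n.choose a * (n - a).choose b = 0 := by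
  obtain ha | ha := le_or_gt a n
  · rw [choose_eq_zero_of_lt (by omega : n - a < b), mul_zero]
  · rw [choose_eq_zero_of_lt ha, zero_mul]

theorem choose_mul_choose_sub_comm_s8 (n a b : ℕ) :
    n.choose a * (n - a).choose b = n.choose b * (n - b).choose a := by
  obtain h | h := le_or_gt (a + b) n
  · have hab := choose_mul (n := n) (Nat.le_add_right a b)
    have hba := choose_mul (n := n) (Nat.le_add_left b a)
    rw [Nat.add_sub_cancel_left] at hab
    rw [Nat.add_sub_cancel] at hba
    rw [← hab, ← hba, choose_symm_add]
  · rw [choose_mul_choose_sub_eq_zero h, choose_mul_choose_sub_eq_zero (by omega)]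

theorem choose_mul_choose_sub_self (m k : ℕ) :
    m.choose k * (m - k).choose k = m.choose (2 * k) * centralBinom k := by
  obtain h | h := le_or_gt (2 * k) m
  · rw [centralBinom, choose_mul (by omega : k ≤ 2 * k), two_mul, Nat.add_sub_cancel]
  · rw [choose_mul_choose_sub_eq_zero (by omega), choose_eq_zero_of_lt h, zero_mul]

theorem add_one_choose_add_one_mul_choose_mul_choose (m j k : ℕ) :
    (m + j + 1).choose (k + 1) * (m + j - k).choose j * (m - k).choose k =
      (m + j + 1) * (m + j).choose j * (m.choose (2 * k) * catalan k) := by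
  apply Nat.eq_of_mul_eq_mul_left k.succ_pos
  calc (k + 1) * ((m + j + 1).choose (k + 1) * (m + j - k).choose j * (m - k).choose k)
      = (m + j + 1) * ((m + j).choose k * (m + j - k).choose j) * (m - k).choose k := by
        rw [← mul_assoc (m + j + 1), add_one_mul_choose_eq]; ring
    _ = (m + j + 1) * (m + j).choose j * (m.choose k * (m - k).choose k) := by
        rw [choose_mul_choose_sub_comm_s8, Nat.add_sub_cancel]; ring
    _ = (k + 1) * ((m + j + 1) * (m + j).choose j * (m.choose (2 * k) * catalan k)) := by
        rw [choose_mul_choose_sub_self, ← succ_mul_catalan_eq_centralBinom]; ring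

end Nat

theorem motzkin_eq_sum_range_div_two (m : ℕ) :
    motzkin m = ∑ k ∈ range (m / 2 + 1), m.choose (2 * k) * catalan k := by
  refine (sum_subset (range_subset_range.2 (by omega)) fun k _ hk => ?_).symm
  rw [mem_range] at hk
  rw [Nat.choose_eq_zero_of_lt (by omega), zero_mul]

/-- Summing the refined count of plane trees over the number of old leaves `i`
recovers the count by young leaves:
`Σ_{i=1}^{⌊(n-j+1)/2⌋} (1/n)·C(n,i)·C(n-i,j)·C(n-i-j,i-1) = C(n-1,j)·M_{n-j-1}`. -/
theorem sum_refined_eq_young_count (n j : ℕ) (hn : 1 ≤ n) (hj : j ≤ n - 1) :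
    ∑ i ∈ Finset.Icc 1 ((n - j + 1) / 2),
        (1 / n : ℚ) * n.choose i * (n - i).choose j * (n - i - j).choose (i - 1) =
      ((n - 1).choose j : ℚ) * motzkin (n - j - 1) := by
  obtain ⟨m, rfl⟩ : ∃ m, n = m + j + 1 := ⟨n - j - 1, by omega⟩
  rw [show (m + j + 1 - j + 1) / 2 = m / 2 + 1 by omega, show m + j + 1 - j - 1 = m by omega,
    Nat.add_sub_cancel, motzkin_eq_sum_range_div_two, Nat.cast_sum, mul_sum,
    ← Ico_add_one_right_eq_Icc, sum_Ico_eq_sum_range, Nat.add_sub_cancel]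
  refine sum_congr rfl fun k _ => ?_
  rw [add_comm 1 k, show m + j + 1 - (k + 1) = m + j - k by omega,
    show m + j - k - j = m - k by omega, Nat.add_sub_cancel]
  have hterm := congrArg (Nat.cast (R := ℚ))
    (Nat.add_one_choose_add_one_mul_choose_mul_choose m j k)
  push_cast at hterm ⊢
  field_simp
  linear_combination hterm
end

section
/- For n ≥ 1: Σ_{k=1}^{n} (1/n)·C(n,k)·C(n,k-1)·4^(n-k) = Σ_{k=0}^{⌊(n-1)/2⌋} Catalan(k)·C(n-1,2k)·4^k·5^(n-2k-1) (Coker's first identity). -/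
/-!
Both sides are the value at `x = 4` of a polynomial of degree `n - 1`: on the left after the
reflection `k ↦ n + 1 - k`, on the right after expanding `(x + 1) ^ (n - 1 - 2k)` binomially.
Comparing coefficients of `x ^ m`, it suffices that
`N(n, m + 1) = Σ_k Cat(k) C(n-1, 2k) C(n-1-2k, m-k)`.
With `Cat(k) = C(2k, k) / (k + 1)`, trinomial revision turns the summand into
`C(n-1, m) C(m, k) C(n-1-m, k) / (k + 1)`, and `C(q, k) / (k + 1) = C(q + 1, k + 1) / (q + 1)`
makes the sum a Vandermonde convolution, `C(n-1, m) C(n, m+1) / (n - m) = N(n, m + 1)`.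
-/

open Finset

namespace Nat

theorem choose_two_mul_mul_choose_mul_choose_sub (n k j : ℕ) :
    n.choose (2 * k) * (2 * k).choose k * (n - 2 * k).choose j =
      n.choose (k + j) * (k + j).choose k * (n - (k + j)).choose k := by
  have h₁ := choose_mul (n := n) (k := 2 * k) (s := k) (by omega)
  have h₂ := choose_mul (n := n - k) (k := k + j) (s := k) (by omega)
  have h₃ := choose_mul (n := n) (k := 2 * k + j) (s := k) (by omega)
  have h₄ := choose_mul (n := n) (k := 2 * k + j) (s := k + j) (by omega)
  have h₅ : (2 * k + j).choose k = (2 * k + j).choose (k + j) := choose_symm_of_eq_add (by ring)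
  rw [show 2 * k - k = k by omega] at h₁
  rw [show n - k - k = n - 2 * k by omega, Nat.add_sub_cancel_left] at h₂
  rw [show 2 * k + j - k = k + j by omega] at h₃
  rw [show 2 * k + j - (k + j) = k by omega] at h₄
  calc n.choose (2 * k) * (2 * k).choose k * (n - 2 * k).choose j
      = n.choose k * ((n - k).choose k * (n - 2 * k).choose j) := by rw [h₁, mul_assoc]
    _ = n.choose (2 * k + j) * (2 * k + j).choose k * (k + j).choose k := by
      rw [← h₂, ← mul_assoc, ← h₃]
    _ = n.choose (k + j) * (k + j).choose k * (n - (k + j)).choose k := by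
      rw [h₅, h₄]; ring

theorem sum_range_choose_mul_choose_succ (m q : ℕ) :
    ∑ k ∈ range (m + 1), m.choose k * (q + 1).choose (k + 1) = (m + q + 1).choose (m + 1) := by
  rw [show m + q + 1 = (q + 1) + m by ring, add_choose_eq, Finset.Nat.sum_antidiagonal_succ,
    Finset.Nat.sum_antidiagonal_eq_sum_range_succ_mk, choose_succ_self, mul_zero, zero_add]
  refine sum_congr rfl fun k hk => ?_
  rw [choose_symm (by simpa [Nat.lt_succ_iff] using hk), mul_comm]

theorem succ_mul_sum_catalan_mul_choose_mul_choose {n m : ℕ} (hm : m ≤ n) :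
    (n + 1) * ∑ k ∈ range (m + 1), catalan k * n.choose (2 * k) * (n - 2 * k).choose (m - k) =
      (n + 1).choose m * (n + 1).choose (m + 1) := by
  obtain ⟨q, rfl⟩ : ∃ q, n = m + q := ⟨n - m, by omega⟩
  have term : ∀ k ∈ range (m + 1),
      (q + 1) * (catalan k * (m + q).choose (2 * k) * (m + q - 2 * k).choose (m - k)) =
        (m + q).choose m * (m.choose k * (q + 1).choose (k + 1)) := by
    intro k hk
    obtain ⟨j, rfl⟩ : ∃ j, m = k + j := ⟨m - k, by simp at hk; omega⟩
    have hcatalan : (k + 1) * catalan k = (2 * k).choose k := by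
      rw [succ_mul_catalan_eq_centralBinom, centralBinom_eq_two_mul_choose]
    apply Nat.eq_of_mul_eq_mul_left k.succ_pos
    calc (k + 1) * ((q + 1) * (catalan k * (k + j + q).choose (2 * k) *
            (k + j + q - 2 * k).choose (k + j - k)))
        = (q + 1) * ((k + j + q).choose (2 * k) * (2 * k).choose k *
            (k + j + q - 2 * k).choose j) := by
          rw [← hcatalan, Nat.add_sub_cancel_left]; ring
      _ = (k + j + q).choose (k + j) * (k + j).choose k * ((q + 1) * q.choose k) := by
          rw [choose_two_mul_mul_choose_mul_choose_sub, show k + j + q - (k + j) = q by omega]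
          ring
      _ = (k + 1) * ((k + j + q).choose (k + j) * ((k + j).choose k * (q + 1).choose (k + 1))) := by
          rw [add_one_mul_choose_eq]; ring
  have hsum : (q + 1) * ∑ k ∈ range (m + 1),
      catalan k * (m + q).choose (2 * k) * (m + q - 2 * k).choose (m - k) =
        (m + q).choose m * (m + q + 1).choose (m + 1) := by
    rw [mul_sum, sum_congr rfl term, ← mul_sum, sum_range_choose_mul_choose_succ]
  apply Nat.eq_of_mul_eq_mul_left q.succ_pos
  calc (q + 1) * ((m + q + 1) * ∑ k ∈ range (m + 1),
        catalan k * (m + q).choose (2 * k) * (m + q - 2 * k).choose (m - k))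
      = (m + q).choose m * (m + q + 1) * (m + q + 1).choose (m + 1) := by
        rw [mul_left_comm, hsum]; ring
    _ = (q + 1) * ((m + q + 1).choose m * (m + q + 1).choose (m + 1)) := by
        rw [choose_mul_succ_eq, show m + q + 1 - m = q + 1 by omega]; ring

end Nat

theorem Finset.sum_mul_pow_mul_add_one_pow {R : Type*} [CommSemiring R] (n : ℕ) (a : ℕ → R)
    (x : R) :
    ∑ k ∈ range (n + 1), a k * x ^ k * (x + 1) ^ (n - 2 * k) =
      ∑ m ∈ range (n + 1), (∑ k ∈ range (m + 1), a k * (n - 2 * k).choose (m - k)) * x ^ m := by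
  calc ∑ k ∈ range (n + 1), a k * x ^ k * (x + 1) ^ (n - 2 * k)
      = ∑ k ∈ range (n + 1), ∑ j ∈ range (n + 1 - k), a k * (n - 2 * k).choose j * x ^ (k + j) := by
        refine sum_congr rfl fun k hk => ?_
        rw [mem_range] at hk
        rw [add_pow, mul_sum,
          sum_subset (range_subset_range.2 (show n - 2 * k + 1 ≤ n + 1 - k by omega))]
        · exact sum_congr rfl fun j _ => by rw [one_pow, pow_add]; ring
        · intro j _ hj
          rw [mem_range] at hj
          rw [Nat.choose_eq_zero_of_lt (by omega), Nat.cast_zero, mul_zero, mul_zero]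
    _ = ∑ m ∈ range (n + 1), ∑ k ∈ range (m + 1),
          a k * (n - 2 * k).choose (m - k) * x ^ (k + (m - k)) :=
        (sum_range_diag_flip _ fun k j => a k * (n - 2 * k).choose j * x ^ (k + j)).symm
    _ = _ := by
        refine sum_congr rfl fun m _ => ?_
        rw [sum_mul]
        refine sum_congr rfl fun k hk => ?_
        rw [Nat.add_sub_cancel' (by simpa [Nat.lt_succ_iff] using hk)]

theorem Finset.sum_Icc_one_eq_sum_range_sub {M : Type*} [AddCommMonoid M] (n : ℕ) (f : ℕ → M) :
    ∑ k ∈ Icc 1 n, f k = ∑ m ∈ range n, f (n - m) := by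
  rw [← Ico_add_one_right_eq_Icc, sum_Ico_eq_sum_range, ← sum_range_reflect]
  refine sum_congr rfl fun m hm => ?_
  rw [mem_range] at hm
  congr 1
  omega

/-- Coker's first identity:
`Σ_{k=1}^n (1/n)·C(n,k)·C(n,k-1)·4^(n-k) = Σ_{k=0}^{⌊(n-1)/2⌋} Catalan(k)·C(n-1,2k)·4^k·5^(n-2k-1)`. -/
theorem coker_first_identity (n : ℕ) (hn : 1 ≤ n) :
    ∑ k ∈ Finset.Icc 1 n, (1 / n : ℚ) * n.choose k * n.choose (k - 1) * 4 ^ (n - k) =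
      ∑ k ∈ Finset.range ((n - 1) / 2 + 1),
        (catalan k : ℚ) * (n - 1).choose (2 * k) * 4 ^ k * 5 ^ (n - 2 * k - 1) := by
  obtain ⟨N, rfl⟩ : ∃ N, n = N + 1 := ⟨n - 1, by omega⟩
  have hcoeff : ∀ m ∈ range (N + 1),
      (1 / (N + 1 : ℕ) : ℚ) * (N + 1).choose (N + 1 - m) * (N + 1).choose (N + 1 - m - 1) *
          4 ^ (N + 1 - (N + 1 - m)) =
        (∑ k ∈ range (m + 1), (catalan k * N.choose (2 * k) : ℚ) * (N - 2 * k).choose (m - k)) *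
          4 ^ m := by
    intro m hm
    rw [mem_range] at hm
    have h := Nat.succ_mul_sum_catalan_mul_choose_mul_choose (Nat.lt_succ_iff.1 hm)
    rw [Nat.choose_symm hm.le,
      Nat.choose_symm_of_eq_add (show N + 1 = N + 1 - m - 1 + (m + 1) by omega),
      show N + 1 - (N + 1 - m) = m by omega]
    congr 1
    field_simp
    exact_mod_cast h.symm
  have hvanish : ∀ k ∈ range (N + 1), k ∉ range (N / 2 + 1) →
      (catalan k * N.choose (2 * k) : ℚ) * 4 ^ k * (4 + 1) ^ (N - 2 * k) = 0 := by
    intro k _ hk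
    rw [mem_range] at hk
    rw [Nat.choose_eq_zero_of_lt (by omega), Nat.cast_zero, mul_zero, zero_mul, zero_mul]
  rw [sum_Icc_one_eq_sum_range_sub, sum_congr rfl hcoeff, ← sum_mul_pow_mul_add_one_pow,
    ← sum_subset (range_subset_range.2 (by omega)) hvanish, Nat.add_sub_cancel]
  refine sum_congr rfl fun k _ => ?_
  rw [show N + 1 - 2 * k - 1 = N - 2 * k by omega]
  norm_num
end

section
/- For n ≥ 1: Σ_{i=1}^{⌊(n+1)/2⌋} Σ_{j=0}^{n-2i+1} (1/n)·C(n,i)·C(n-i,j)·C(n-i-j,i-1) = Catalan(n), i.e., the total number of plane trees with n edges is the n-th Catalan number, recovered by summing the refined count over all numbers of old and young leaves. -/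
/-!
Expand `(1 + X)^(2n) = (X² + X + (1 + X))^n`: choosing `i` factors `X²`, `j` factors `X` and
taking `X` from `n + 1 - 2i - j` (equivalently `1` from `i - 1`) of the remaining factors `1 + X`
shows that the coefficient `C(2n, n+1)` of `X^(n+1)` is the double sum of
`C(n,i)·C(n-i,j)·C(n-i-j,i-1)`. Finally `C(2n, n+1) = n·Catalan(n)`.
-/

open Finset Polynomial

theorem choose_two_mul_eq_sum_choose_mul_choose_mul (n d : ℕ) :
    (2 * n).choose d = ∑ i ∈ range (n + 1), ∑ j ∈ range (n - i + 1),
      n.choose i * (n - i).choose j *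
        if 2 * i + j ≤ d then (n - i - j).choose (d - (2 * i + j)) else 0 := by
  have hsplit : (X + 1 : ℕ[X]) ^ (2 * n) = (X ^ 2 + (X + (X + 1))) ^ n := by
    rw [pow_mul]; ring
  rw [← Nat.cast_id ((2 * n).choose d), ← coeff_X_add_one_pow ℕ, hsplit, add_pow, finsetSum_coeff]
  refine sum_congr rfl fun i _ => ?_
  rw [add_pow, mul_sum, sum_mul, finsetSum_coeff]
  refine sum_congr rfl fun j _ => ?_
  have hterm : (X ^ 2) ^ i * (X ^ j * (X + 1) ^ (n - i - j) * ((n - i).choose j : ℕ[X])) *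
      (n.choose i : ℕ[X]) =
      C (n.choose i * (n - i).choose j) * (X ^ (2 * i + j) * (X + 1) ^ (n - i - j)) := by
    rw [C_mul, ← pow_mul, pow_add]
    simp only [← C_eq_natCast, Nat.cast_id]
    ring
  rw [hterm, coeff_C_mul, coeff_X_pow_mul', coeff_X_add_one_pow, Nat.cast_id]

theorem sum_choose_mul_choose_mul_choose_eq_choose (n : ℕ) :
    ∑ i ∈ Icc 1 ((n + 1) / 2), ∑ j ∈ range (n + 2 - 2 * i),
        n.choose i * (n - i).choose j * (n - i - j).choose (i - 1) =
      (2 * n).choose (n + 1) := by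
  rw [choose_two_mul_eq_sum_choose_mul_choose_mul]
  refine sum_subset_zero_on_sdiff (fun i hi => by simp only [mem_Icc, mem_range] at hi ⊢; omega) ?_ ?_
  · intro i hi
    simp only [mem_sdiff, mem_range, mem_Icc] at hi
    refine sum_eq_zero fun j hj => ?_
    simp only [mem_range] at hj
    split_ifs with h
    · rw [Nat.choose_eq_zero_of_lt (n := n - i - j) (by omega), mul_zero]
    · rw [mul_zero]
  · intro i hi
    simp only [mem_Icc] at hi
    refine sum_subset_zero_on_sdiff (fun j hj => by simp only [mem_range] at hj ⊢; omega) ?_ ?_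
    · intro j hj
      simp only [mem_sdiff, mem_range] at hj
      rw [if_neg (by omega), mul_zero]
    · intro j hj
      simp only [mem_range] at hj
      rw [if_pos (by omega), Nat.choose_symm_of_eq_add (n := n - i - j) (a := i - 1)
        (b := n + 1 - (2 * i + j)) (by omega)]

theorem choose_two_mul_succ_eq_mul_catalan (n : ℕ) : (2 * n).choose (n + 1) = n * catalan n := by
  refine Nat.eq_of_mul_eq_mul_right (by omega : 0 < n + 1) ?_
  rw [Nat.choose_succ_right_eq, show 2 * n - n = n by omega, ← Nat.centralBinom_eq_two_mul_choose,
    ← succ_mul_catalan_eq_centralBinom]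
  ring

/-- Summing the refined count of plane trees over all numbers of old and young leaves
gives the `n`-th Catalan number:
`Σ_{i=1}^{⌊(n+1)/2⌋} Σ_{j=0}^{n-2i+1} (1/n)·C(n,i)·C(n-i,j)·C(n-i-j,i-1) = Catalan(n)`. -/
theorem sum_refined_eq_catalan (n : ℕ) (hn : 1 ≤ n) :
    ∑ i ∈ Finset.Icc 1 ((n + 1) / 2), ∑ j ∈ Finset.range (n + 2 - 2 * i),
        (1 / n : ℚ) * n.choose i * (n - i).choose j * (n - i - j).choose (i - 1) =
      (catalan n : ℚ) := by
  have hsum : ∑ i ∈ Icc 1 ((n + 1) / 2), ∑ j ∈ range (n + 2 - 2 * i),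
      (n.choose i * (n - i).choose j * (n - i - j).choose (i - 1) : ℚ) = n * catalan n := by
    exact_mod_cast (sum_choose_mul_choose_mul_choose_eq_choose n).trans
      (choose_two_mul_succ_eq_mul_catalan n)
  have hn0 : (n : ℚ) ≠ 0 := by exact_mod_cast (by omega : n ≠ 0)
  simp only [mul_assoc, ← mul_sum] at hsum ⊢
  rw [hsum, one_div, inv_mul_cancel_left₀ hn0]
end
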